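/- Let k be a nontrivial commutative ring, let V = k^n be the free k-module with basis v_1, ..., v_n, and let the symmetric group W_n act on the r-fold tensor power V^{⊗r} diagonally by permuting basis vectors (w·(v_{i_1} ⊗ ... ⊗ v_{i_r}) = v_{w(i_1)} ⊗ ... ⊗ v_{w(i_r)}). If r ≥ n, then the induced algebra homomorphism Φ_{n,r} from the group algebra k[W_n] to End_k(V^{⊗r}) is injective (the representation is faithful). -/

import Mathlib

/-! A multi-index `i : Fin r → Fin n` that takes every value (possible since `r ≥ n`) has trivial
stabiliser in `W_n`, so the basis tensors `e_{w • i}` are pairwise distinct and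
`Φ(a) e_i = Σ_w a_w e_{w • i}` recovers every coefficient of `a`. -/

noncomputable section

open Equiv

/-- The linear action of a group `G` on the free `k`-module `X → k` of functions,
induced from a `G`-action on `X` by `(g • f) x = f (g⁻¹ • x)`. -/
def actEnd (k : Type) [CommRing k] (G : Type) [Group G] (X : Type) [MulAction G X] :
    G →* Module.End k (X → k) where
  toFun g := LinearMap.funLeft k k fun x => g⁻¹ • x
  map_one' := by
    ext f x
    simp
  map_mul' g₁ g₂ := by
    ext f x
    simp [mul_smul]

/-- The diagonal (value-permutation) action of the symmetric group `W_n` on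
`V^{⊗r}` (`V = k^n`), modelled as the free `k`-module on multi-indices `Fin r → Fin n`;
on basis vectors, `w ⬝ (v_{i_1} ⊗ ⋯ ⊗ v_{i_r}) = v_{w i_1} ⊗ ⋯ ⊗ v_{w i_r}`. -/
def permEnd (k : Type) [CommRing k] (n r : ℕ) :
    Equiv.Perm (Fin n) →* Module.End k ((Fin r → Fin n) → k) :=
  actEnd k (Equiv.Perm (Fin n)) (Fin r → Fin n)

/-- `Φ_{n,r} : k[W_n] → End_k(V^{⊗r})`. -/
def PhiAlg (k : Type) [CommRing k] (n r : ℕ) :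
    MonoidAlgebra k (Equiv.Perm (Fin n)) →ₐ[k] Module.End k ((Fin r → Fin n) → k) :=
  MonoidAlgebra.lift k (Module.End k ((Fin r → Fin n) → k)) (Equiv.Perm (Fin n)) (permEnd k n r)

/-- The restriction of `Φ_{n,r}` to the group algebra of a subgroup `G ≤ W_n`. -/
def PhiSub (k : Type) [CommRing k] (n r : ℕ) (G : Subgroup (Equiv.Perm (Fin n))) :
    MonoidAlgebra k ↥G →ₐ[k] Module.End k ((Fin r → Fin n) → k) :=
  MonoidAlgebra.lift k (Module.End k ((Fin r → Fin n) → k)) ↥G ((permEnd k n r).comp G.subtype)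

/-- `W_{n-1} = {w ∈ W_n : w(n) = n}`, the stabilizer of the last basis vector. -/
def stabLast (n : ℕ) (hn : 0 < n) : Subgroup (Equiv.Perm (Fin n)) :=
  MulAction.stabilizer (Equiv.Perm (Fin n)) (⟨n - 1, Nat.sub_lt hn Nat.one_pos⟩ : Fin n)

/-- `V(Λ)`: the span of the basis tensors whose multi-index has value-type `Λ`
(the value-type of a multi-index `i` is the set-partition `Setoid.ker i` by fibers). -/
def Vpart (k : Type) [CommRing k] (n r : ℕ) (Λ : Setoid (Fin r)) :
    Submodule k ((Fin r → Fin n) → k) :=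
  Submodule.span k {f | ∃ i : Fin r → Fin n, Setoid.ker i = Λ ∧ f = Pi.single i 1}

/-- `V'(Λ')`: the span of the basis tensors `v_{i_1} ⊗ ⋯ ⊗ v_{i_r} ⊗ v_n`
whose multi-index `(i_1, …, i_r, n)` has value-type `Λ'`. -/
def Vpart' (k : Type) [CommRing k] (n r : ℕ) (hn : 0 < n) (Λ' : Setoid (Fin (r + 1))) :
    Submodule k ((Fin (r + 1) → Fin n) → k) :=
  Submodule.span k {f | ∃ i : Fin (r + 1) → Fin n, Setoid.ker i = Λ' ∧
    i (Fin.last r) = (⟨n - 1, Nat.sub_lt hn Nat.one_pos⟩ : Fin n) ∧ f = Pi.single i 1}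

/-- The submodule `V^{⊗r} ⊗ v_n ⊆ V^{⊗(r+1)}`. -/
def lastSub (k : Type) [CommRing k] (n r : ℕ) (hn : 0 < n) :
    Submodule k ((Fin (r + 1) → Fin n) → k) :=
  Submodule.span k {f | ∃ i : Fin (r + 1) → Fin n,
    i (Fin.last r) = (⟨n - 1, Nat.sub_lt hn Nat.one_pos⟩ : Fin n) ∧ f = Pi.single i 1}

/-- The multi-index of the tensor `v_{n-l+1} ⊗ ⋯ ⊗ v_n`. -/
def baseIdx (n l : ℕ) (h : l ≤ n) : Fin l → Fin n :=
  fun α => ⟨n - l + α.1, by have := α.isLt; omega⟩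

/-- `H_n(l)`: the `k[W_n]`-submodule of `V^{⊗l}` generated by `v_{n-l+1} ⊗ ⋯ ⊗ v_n`. -/
def Hmod (k : Type) [CommRing k] (n l : ℕ) (h : l ≤ n) :
    Submodule k ((Fin l → Fin n) → k) :=
  Submodule.span k
    (Set.range fun w : Equiv.Perm (Fin n) => permEnd k n l w (Pi.single (baseIdx n l h) 1))

/-- The multi-index of the tensor `v_{n-m} ⊗ ⋯ ⊗ v_{n-1}` (inside `U = ⟨v_1, …, v_{n-1}⟩`). -/
def baseIdx' (n m : ℕ) (h : m < n) : Fin m → Fin n :=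
  fun α => ⟨n - 1 - m + α.1, by have := α.isLt; omega⟩

/-- `H_{n-1}(m)`: the `k[W_{n-1}]`-submodule of `U^{⊗m}` generated by
`v_{n-m} ⊗ ⋯ ⊗ v_{n-1}`, where `U = ⟨v_1, …, v_{n-1}⟩`. -/
def Hprime (k : Type) [CommRing k] (n m : ℕ) (h : m < n) :
    Submodule k ((Fin m → Fin n) → k) :=
  Submodule.span k
    (Set.range fun w : ↥(stabLast n (by omega)) =>
      permEnd k n m ↑w (Pi.single (baseIdx' n m h) 1))

/-- The Young subgroup `W_{(n-l,1^l)}` of permutations fixing each of the last `l` points. -/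
def fixTop (n l : ℕ) : Subgroup (Equiv.Perm (Fin n)) where
  carrier := {w | ∀ j : Fin n, n - l ≤ (j : ℕ) → w j = j}
  one_mem' := by intro j _; rfl
  mul_mem' := by
    intro a b ha hb j hj
    simp only [Set.mem_setOf_eq] at ha hb
    rw [Equiv.Perm.mul_apply, hb j hj, ha j hj]
  inv_mem' := by
    intro a ha j hj
    simp only [Set.mem_setOf_eq] at ha
    conv_lhs => rw [← ha j hj]
    exact (Equiv.symm_apply_apply a j : a⁻¹ (a j) = j)

/-- The index of the consecutive block (with block sizes `lam`) containing position `x`. -/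
def blockIdx (lam : List ℕ) (x : ℕ) : ℕ :=
  ((List.range lam.length).filter fun t => (lam.take (t + 1)).sum ≤ x).length

/-- The Young subgroup `W_λ ≤ W_d`: permutations preserving each consecutive block
of sizes `λ_1, λ_2, …`. -/
def youngSubgroup (d : ℕ) (lam : List ℕ) : Subgroup (Equiv.Perm (Fin d)) where
  carrier := {w | ∀ j : Fin d, blockIdx lam ((w j : Fin d) : ℕ) = blockIdx lam (j : ℕ)}
  one_mem' := by intro j; rfl
  mul_mem' := by
    intro a b ha hb j
    simp only [Set.mem_setOf_eq] at ha hb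
    rw [Equiv.Perm.mul_apply, ha (b j), hb j]
  inv_mem' := by
    intro a ha j
    simp only [Set.mem_setOf_eq] at ha
    have hinv : a (a⁻¹ j) = j := Equiv.apply_symm_apply a j
    conv_rhs => rw [← hinv]
    rw [ha (a⁻¹ j)]

/-- `x_λ = Σ_{w ∈ W_λ} w ∈ k[W_d]`. -/
def xElt (k : Type) [CommRing k] (d : ℕ) (lam : List ℕ) :
    MonoidAlgebra k (Equiv.Perm (Fin d)) :=
  letI := Classical.decPred (· ∈ youngSubgroup d lam)
  ∑ w ∈ Finset.univ.filter (· ∈ youngSubgroup d lam), MonoidAlgebra.single w (1 : k)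

/-- `y_λ = Σ_{w ∈ W_λ} sgn(w) w ∈ k[W_d]`. -/
def yElt (k : Type) [CommRing k] (d : ℕ) (lam : List ℕ) :
    MonoidAlgebra k (Equiv.Perm (Fin d)) :=
  letI := Classical.decPred (· ∈ youngSubgroup d lam)
  ∑ w ∈ Finset.univ.filter (· ∈ youngSubgroup d lam),
    MonoidAlgebra.single w ((Equiv.Perm.sign w : ℤ) : k)

/-- `y_λ = Σ_{w ∈ W_λ ∩ G} sgn(w) w`, as an element of the group algebra of a
subgroup `G ≤ W_d` (for `G = W_{n-1}` and `λ ⊢ n-1` this is the usual `y_λ ∈ k[W_{n-1}]`). -/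
def yEltSub (k : Type) [CommRing k] {d : ℕ} (G : Subgroup (Equiv.Perm (Fin d)))
    (lam : List ℕ) : MonoidAlgebra k ↥G :=
  letI : Fintype ↥G := Fintype.ofFinite ↥G
  letI := Classical.decPred fun w : ↥G => (w : Equiv.Perm (Fin d)) ∈ youngSubgroup d lam
  ∑ w ∈ Finset.univ.filter (fun w : ↥G => (w : Equiv.Perm (Fin d)) ∈ youngSubgroup d lam),
    MonoidAlgebra.single w ((Equiv.Perm.sign (w : Equiv.Perm (Fin d)) : ℤ) : k)

/-- The dominance order on partitions (as lists of parts): `lam ⊵ mu`. -/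
def Dominates (lam mu : List ℕ) : Prop :=
  ∀ t : ℕ, (mu.take t).sum ≤ (lam.take t).sum

/-- The conjugate (transpose) partition: `μᵀ_i = #{j : μ_j ≥ i}`. -/
def conjList (mu : List ℕ) : List ℕ :=
  (List.range mu.headI).map fun i => (mu.filter fun p => i < p).length

/-- `lam` is a partition of `d`: positive parts, in weakly decreasing order, summing to `d`. -/
def IsPartitionList (d : ℕ) (lam : List ℕ) : Prop :=
  (∀ p ∈ lam, 0 < p) ∧ lam.sum = d ∧ lam.Pairwise (· ≥ ·)

/-- The hook partition `α(d,r) = (d-r, 1^r)`. -/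
def hookPartition (d r : ℕ) : List ℕ := (d - r) :: List.replicate r 1

/-- The representation of `k[W_d]` on the permutation module `M^λ`, the free `k`-module
on the left cosets `W_d / W_λ` with `W_d` acting by left translation. -/
def PhiQuot (k : Type) [CommRing k] (d : ℕ) (lam : List ℕ) :
    MonoidAlgebra k (Equiv.Perm (Fin d)) →ₐ[k]
      Module.End k ((Equiv.Perm (Fin d) ⧸ youngSubgroup d lam) → k) :=
  MonoidAlgebra.lift k _ _
    (actEnd k (Equiv.Perm (Fin d)) (Equiv.Perm (Fin d) ⧸ youngSubgroup d lam))

/-- The representation of `k[G]` (for `G ≤ W_d`) on the permutation module on the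
left cosets `G / (G ∩ W_λ)`. -/
def PhiQuotSub (k : Type) [CommRing k] {d : ℕ} (G : Subgroup (Equiv.Perm (Fin d)))
    (lam : List ℕ) :
    MonoidAlgebra k ↥G →ₐ[k]
      Module.End k ((↥G ⧸ Subgroup.comap G.subtype (youngSubgroup d lam)) → k) :=
  MonoidAlgebra.lift k _ _
    (actEnd k ↥G (↥G ⧸ Subgroup.comap G.subtype (youngSubgroup d lam)))

/-- The Stirling number of the second kind `S(r,l)`: the number of set-partitions
of an `r`-element set into exactly `l` nonempty blocks. -/
def stirling (r l : ℕ) : ℕ :=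
  Nat.card {Λ : Setoid (Fin r) // Nat.card (Quotient Λ) = l}

section

variable {k : Type} [CommRing k] {G : Type} [Group G] {X : Type} [MulAction G X]

theorem actEnd_single [DecidableEq X] (g : G) (x : X) (c : k) :
    actEnd k G X g (Pi.single x c) = Pi.single (g • x) c := by
  ext y
  simp only [actEnd, MonoidHom.coe_mk, OneHom.coe_mk, LinearMap.funLeft_apply, Pi.single_apply,
    inv_smul_eq_iff]

theorem lift_actEnd_single_apply [DecidableEq X] {x : X} (hx : Function.Injective (· • x : G → X))
    (a : MonoidAlgebra k G) (g : G) :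
    MonoidAlgebra.lift k _ G (actEnd k G X) a (Pi.single x 1) (g • x) = a.coeff g := by
  classical
  have hx_iff : ∀ h : G, g • x = h • x ↔ g = h := fun h => hx.eq_iff
  rw [MonoidAlgebra.lift_apply, Finsupp.sum, LinearMap.coe_sum, Finset.sum_apply,
    Finset.sum_apply]
  simp only [LinearMap.smul_apply, actEnd_single, Pi.smul_apply, Pi.single_apply, hx_iff,
    smul_eq_mul, mul_ite, mul_one, mul_zero, Finset.sum_ite_eq, Finsupp.if_mem_support]

theorem lift_actEnd_injective {x : X} (hx : Function.Injective (· • x : G → X)) :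
    Function.Injective (MonoidAlgebra.lift k _ G (actEnd k G X)) := by
  classical
  intro a b hab
  ext g
  rw [← lift_actEnd_single_apply hx, ← lift_actEnd_single_apply hx, hab]

end

theorem Equiv.Perm.smul_left_injective_of_surjective {ι α : Type*} {i : ι → α}
    (hi : Function.Surjective i) : Function.Injective (· • i : Equiv.Perm α → ι → α) := by
  intro g h hgh
  ext b
  obtain ⟨a, rfl⟩ := hi b
  exact congrFun hgh a

theorem stmt_0_general (k : Type) [CommRing k] (n r : ℕ) (hn : 0 < n)
    (hr : n ≤ r) : Function.Injective ⇑(PhiAlg k n r) :=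
  have : Nonempty (Fin n) := ⟨⟨0, hn⟩⟩
  lift_actEnd_injective <| Equiv.Perm.smul_left_injective_of_surjective <|
    Function.invFun_surjective (Fin.castLE_injective hr)

/-- If `r ≥ n`, the representation `Φ_{n,r} : k[W_n] → End_k(V^{⊗r})` is faithful. -/
theorem stmt_0 (k : Type) [CommRing k] [Nontrivial k] (n r : ℕ) (hn : 0 < n)
    (hr : n ≤ r) : Function.Injective ⇑(PhiAlg k n r) :=
  stmt_0_general k n r hn hr
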